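/- With the Hadamard-based input encoding, the states ρ₀ and ρ₁ are simultaneously diagonalized in an entangled eigenbasis: ρ₀ = λ₊|φ₁⟩⟨φ₁| + λ₋|φ₂⟩⟨φ₂| + (1/4)|φ₃⟩⟨φ₃| + (1/4)|φ₄⟩⟨φ₄| and ρ₁ = λ₋|φ₁⟩⟨φ₁| + λ₊|φ₂⟩⟨φ₂| + (1/4)|φ₃⟩⟨φ₃| + (1/4)|φ₄⟩⟨φ₄|, where λ± = (1 ± 1/√2)/4, |φ₁⟩ = √(2λ₊)|Φ⁻⟩ + √(2λ₋)|Ψ⁺⟩, |φ₂⟩ = √(2λ₋)|Φ⁻⟩ − √(2λ₊)|Ψ⁺⟩, |φ₃⟩ = |Φ⁺⟩, |φ₄⟩ = |Ψ⁻⟩. -/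
import Mathlib


open Matrix Complex Kronecker BigOperators

noncomputable section

abbrev Mat2 := Matrix (Fin 2) (Fin 2) ℂ
abbrev Mat4 := Matrix (Fin 2 × Fin 2) (Fin 2 × Fin 2) ℂ

/-- the Hadamard matrix (1/√2)·!![1,1;1,−1] -/
def Had : Mat2 := (1 / (Real.sqrt 2 : ℂ)) • !![1, 1; 1, -1]

/-- boolean function f(x̄,ȳ) = (x₁·y₁) XOR x₂ XOR y₂ -/
def fxy (x y : Bool × Bool) : Bool := (((x.1 && y.1)).xor x.2).xor y.2

/-- standard basis vectors of ℂ² indexed by a bit -/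
def ketb (b : Bool) : Fin 2 → ℂ := fun i => if i = (if b then 1 else 0) then 1 else 0

/-- projector onto the standard basis state |x₂⟩ -/
def projb (b : Bool) : Mat2 := Matrix.vecMulVec (ketb b) (star (ketb b))

/-- Hadamard-encoded qubit input ω_{(x₁,x₂)} = H^{x₁}|x₂⟩⟨x₂|H^{x₁} -/
def omgH (x : Bool × Bool) : Mat2 :=
  (if x.1 then Had else 1) * projb x.2 * (if x.1 then Had else 1)

/-- averaged input states ρ₀ (c = false) and ρ₁ (c = true) for the Hadamard encoding -/
def rhoH (c : Bool) : Mat4 :=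
  (1/8 : ℂ) • ∑ x : Bool × Bool, ∑ y : Bool × Bool,
    (if fxy x y = c then omgH x ⊗ₖ omgH y else 0)

/-- standard basis vectors of ℂ⁴ ≅ ℂ² ⊗ ℂ² -/
def ket (i j : Fin 2) : (Fin 2 × Fin 2) → ℂ := fun p => if p = (i, j) then 1 else 0

def PhiP : (Fin 2 × Fin 2) → ℂ := fun p => (1 / (Real.sqrt 2 : ℂ)) * (ket 0 0 p + ket 1 1 p)
def PhiM : (Fin 2 × Fin 2) → ℂ := fun p => (1 / (Real.sqrt 2 : ℂ)) * (ket 0 0 p - ket 1 1 p)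
def PsiP : (Fin 2 × Fin 2) → ℂ := fun p => (1 / (Real.sqrt 2 : ℂ)) * (ket 0 1 p + ket 1 0 p)
def PsiM : (Fin 2 × Fin 2) → ℂ := fun p => (1 / (Real.sqrt 2 : ℂ)) * (ket 0 1 p - ket 1 0 p)

/-- rank one projector |v⟩⟨v| -/
def proj (v : (Fin 2 × Fin 2) → ℂ) : Mat4 := Matrix.vecMulVec v (star v)

/-- eigenvalues λ± = (1 ± 1/√2)/4 -/
def lamP : ℝ := (1 + 1/Real.sqrt 2)/4
def lamM : ℝ := (1 - 1/Real.sqrt 2)/4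

/-- entangled eigenvectors -/
def phi1 : (Fin 2 × Fin 2) → ℂ :=
  (Real.sqrt (2*lamP) : ℂ) • PhiM + (Real.sqrt (2*lamM) : ℂ) • PsiP
def phi2 : (Fin 2 × Fin 2) → ℂ :=
  (Real.sqrt (2*lamM) : ℂ) • PhiM - (Real.sqrt (2*lamP) : ℂ) • PsiP
def phi3 : (Fin 2 × Fin 2) → ℂ := PhiP
def phi4 : (Fin 2 × Fin 2) → ℂ := PsiM

lemma hs : (Real.sqrt 2 : ℂ) * (Real.sqrt 2 : ℂ) = 2 := by
  rw [← Complex.ofReal_mul]; norm_num [Real.mul_self_sqrt]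

lemma hsne : (Real.sqrt 2 : ℂ) ≠ 0 := by
  simp only [ne_eq, Complex.ofReal_eq_zero]
  positivity

lemma projb_f : projb false = !![1,0;0,0] := by
  ext i j
  fin_cases i <;> fin_cases j <;>
    simp [projb, ketb, Matrix.vecMulVec_apply, Fin.ext_iff]

lemma projb_t : projb true = !![0,0;0,1] := by
  ext i j
  fin_cases i <;> fin_cases j <;>
    simp [projb, ketb, Matrix.vecMulVec_apply, Fin.ext_iff]

lemma omg_ff : omgH (false, false) = !![1,0;0,0] := by
  simp [omgH, projb_f]

lemma omg_ft : omgH (false, true) = !![0,0;0,1] := by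
  simp [omgH, projb_t]

lemma omg_tf : omgH (true, false) = !![1/2,1/2;1/2,1/2] := by
  simp only [omgH, if_true, projb_f, Had, smul_mul_assoc, mul_smul_comm, smul_smul,
    Matrix.mul_fin_two]
  norm_num
  have hi : ((Real.sqrt 2:ℂ))⁻¹ * ((Real.sqrt 2:ℂ))⁻¹ = 1/2 := by
    rw [← mul_inv, hs]; norm_num
  rw [hi]

lemma omg_tt : omgH (true, true) = !![1/2,-(1/2);-(1/2),1/2] := by
  simp only [omgH, if_true, projb_t, Had, smul_mul_assoc, mul_smul_comm, smul_smul,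
    Matrix.mul_fin_two]
  norm_num
  have hi : ((Real.sqrt 2:ℂ))⁻¹ * ((Real.sqrt 2:ℂ))⁻¹ = 1/2 := by
    rw [← mul_inv, hs]; norm_num
  rw [hi]

lemma hsr : Real.sqrt 2 * Real.sqrt 2 = 2 := Real.mul_self_sqrt (by norm_num)
lemma hsrpos : (0:ℝ) < Real.sqrt 2 := Real.sqrt_pos.mpr (by norm_num)
lemma hinv : (1:ℝ)/Real.sqrt 2 = Real.sqrt 2 / 2 := by
  rw [div_eq_div_iff (by positivity) (by norm_num), one_mul, hsr]
lemma hlp : (0:ℝ) ≤ 2 * lamP := by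
  unfold lamP; positivity
lemma hlm : (0:ℝ) ≤ 2 * lamM := by
  unfold lamM
  have : 1/Real.sqrt 2 ≤ 1 := by
    rw [div_le_one hsrpos]; nlinarith [hsr, hsrpos]
  nlinarith
lemma ha : ((Real.sqrt (2*lamP) : ℝ) : ℂ) * ((Real.sqrt (2*lamP) : ℝ) : ℂ) = 1/2 + (Real.sqrt 2:ℂ)/4 := by
  rw [← Complex.ofReal_mul, Real.mul_self_sqrt hlp]
  unfold lamP; rw [hinv]; push_cast; ring
lemma hb : ((Real.sqrt (2*lamM) : ℝ) : ℂ) * ((Real.sqrt (2*lamM) : ℝ) : ℂ) = 1/2 - (Real.sqrt 2:ℂ)/4 := by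
  rw [← Complex.ofReal_mul, Real.mul_self_sqrt hlm]
  unfold lamM; rw [hinv]; push_cast; ring
lemma hab : ((Real.sqrt (2*lamP) : ℝ) : ℂ) * ((Real.sqrt (2*lamM) : ℝ) : ℂ) = (Real.sqrt 2:ℂ)/4 := by
  rw [← Complex.ofReal_mul, ← Real.sqrt_mul hlp]
  have : 2 * lamP * (2 * lamM) = (Real.sqrt 2/4)^2 := by
    unfold lamP lamM
    have h1 : (1:ℝ)/Real.sqrt 2 * (1/Real.sqrt 2) = 1/2 := by
      rw [div_mul_div_comm, one_mul, hsr]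
    nlinarith [hsr]
  rw [this, Real.sqrt_sq (by positivity)]; push_cast; ring
lemma hlamPc : ((lamP:ℝ):ℂ) = 1/4 + (Real.sqrt 2:ℂ)/8 := by
  unfold lamP; rw [hinv]; push_cast; ring
lemma hlamMc : ((lamM:ℝ):ℂ) = 1/4 - (Real.sqrt 2:ℂ)/8 := by
  unfold lamM; rw [hinv]; push_cast; ring


def cross : Mat4 := Matrix.vecMulVec PhiM (star PsiP) + Matrix.vecMulVec PsiP (star PhiM)

lemma combo0 : lamP • proj phi1 + lamM • proj phi2
    = (3/8 : ℂ) • proj PhiM + (1/8 : ℂ) • proj PsiP + (1/8 : ℂ) • cross := by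
  ext p q
  simp only [proj, phi1, phi2, cross, Matrix.add_apply, Matrix.smul_apply,
    Matrix.vecMulVec_apply, Pi.add_apply, Pi.sub_apply, Pi.smul_apply, Pi.star_apply,
    smul_eq_mul, star_add, star_sub, star_mul', RCLike.star_def, Complex.conj_ofReal,
    Complex.real_smul]
  rw [hlamPc, hlamMc]
  set x := (Real.sqrt 2 : ℂ)
  set A := PhiM p
  set B := PsiP p
  set A' := (starRingEnd ℂ) (PhiM q)
  set B' := (starRingEnd ℂ) (PsiP q)
  linear_combination (A*A') * ((1/4+x/8)*ha + (1/4-x/8)*hb + (1/16)*hs)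
    + (B*B') * ((1/4+x/8)*hb + (1/4-x/8)*ha - (1/16)*hs)
    + (A*B' + B*A') * ((x/4)*hab + (1/16)*hs)

lemma combo1 : lamM • proj phi1 + lamP • proj phi2
    = (1/8 : ℂ) • proj PhiM + (3/8 : ℂ) • proj PsiP - (1/8 : ℂ) • cross := by
  ext p q
  simp only [proj, phi1, phi2, cross, Matrix.add_apply, Matrix.sub_apply, Matrix.smul_apply,
    Matrix.vecMulVec_apply, Pi.add_apply, Pi.sub_apply, Pi.smul_apply, Pi.star_apply,
    smul_eq_mul, star_add, star_sub, star_mul', RCLike.star_def, Complex.conj_ofReal,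
    Complex.real_smul]
  rw [hlamPc, hlamMc]
  set x := (Real.sqrt 2 : ℂ)
  set A := PhiM p
  set B := PsiP p
  set A' := (starRingEnd ℂ) (PhiM q)
  set B' := (starRingEnd ℂ) (PsiP q)
  linear_combination (A*A') * ((1/4-x/8)*ha + (1/4+x/8)*hb - (1/16)*hs)
    + (B*B') * ((1/4-x/8)*hb + (1/4+x/8)*ha + (1/16)*hs)
    + (A*B' + B*A') * (-(x/4)*hab - (1/16)*hs)

lemma hsi : ((Real.sqrt 2:ℂ))⁻¹ * ((Real.sqrt 2:ℂ))⁻¹ = 1/2 := by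
  rw [← mul_inv, hs]; norm_num


lemma starPhiP : star PhiP = PhiP := by
  funext p
  simp [PhiP, ket, Complex.star_def, map_add, _root_.map_mul, map_div₀,
    _root_.map_one, Complex.conj_ofReal, apply_ite (starRingEnd ℂ)]

lemma starPhiM : star PhiM = PhiM := by
  funext p
  simp [PhiM, ket, Complex.star_def, map_add, map_sub, _root_.map_mul, map_div₀,
    _root_.map_one, Complex.conj_ofReal, apply_ite (starRingEnd ℂ)]

lemma starPsiP : star PsiP = PsiP := by
  funext p
  simp [PsiP, ket, Complex.star_def, map_add, _root_.map_mul, map_div₀,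
    _root_.map_one, Complex.conj_ofReal, apply_ite (starRingEnd ℂ)]

lemma starPsiM : star PsiM = PsiM := by
  funext p
  simp [PsiM, ket, Complex.star_def, map_add, map_sub, _root_.map_mul, map_div₀,
    _root_.map_one, Complex.conj_ofReal, apply_ite (starRingEnd ℂ)]

lemma rho0_eq : rhoH false = (1/8 : ℂ) •
    (omgH (false,false) ⊗ₖ omgH (false,false) + omgH (false,false) ⊗ₖ omgH (true,false)
      + omgH (false,true) ⊗ₖ omgH (false,true) + omgH (false,true) ⊗ₖ omgH (true,true)
      + omgH (true,false) ⊗ₖ omgH (false,false) + omgH (true,false) ⊗ₖ omgH (true,true)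
      + omgH (true,true) ⊗ₖ omgH (false,true) + omgH (true,true) ⊗ₖ omgH (true,false)) := by
  rw [rhoH]
  rw [Fintype.sum_prod_type]
  simp only [Fintype.sum_bool, Fintype.sum_prod_type]
  norm_num [fxy]
  abel_nf

lemma rho1_eq : rhoH true = (1/8 : ℂ) •
    (omgH (false,false) ⊗ₖ omgH (false,true) + omgH (false,false) ⊗ₖ omgH (true,true)
      + omgH (false,true) ⊗ₖ omgH (false,false) + omgH (false,true) ⊗ₖ omgH (true,false)
      + omgH (true,false) ⊗ₖ omgH (false,true) + omgH (true,false) ⊗ₖ omgH (true,false)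
      + omgH (true,true) ⊗ₖ omgH (false,false) + omgH (true,true) ⊗ₖ omgH (true,true)) := by
  rw [rhoH]
  rw [Fintype.sum_prod_type]
  simp only [Fintype.sum_bool, Fintype.sum_prod_type]
  norm_num [fxy]
  abel_nf

set_option maxHeartbeats 1000000 in
lemma rho0_decomp : rhoH false = (3/8 : ℂ) • proj PhiM + (1/8 : ℂ) • proj PsiP + (1/8 : ℂ) • cross
    + (1/4 : ℝ) • proj PhiP + (1/4 : ℝ) • proj PsiM := by
  rw [rho0_eq, omg_ff, omg_ft, omg_tf, omg_tt]
  ext ⟨i,j⟩ ⟨k,l⟩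
  fin_cases i <;> fin_cases j <;> fin_cases k <;> fin_cases l <;>
  · simp only [proj, cross, starPhiP, starPhiM, starPsiP, starPsiM, PhiP, PhiM, PsiP, PsiM, ket,
      Matrix.add_apply, Matrix.smul_apply, Matrix.kroneckerMap_apply, Matrix.vecMulVec_apply,
      Matrix.cons_val', Matrix.cons_val_zero, Matrix.cons_val_one, Matrix.head_cons,
      Matrix.head_fin_const, Matrix.empty_val', Matrix.cons_val_fin_one, Matrix.of_apply,
      smul_eq_mul, Complex.real_smul, Prod.mk.injEq]
    norm_num [Fin.ext_iff]
    ring_nf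
    simp only [pow_two, hsi, one_div]
    norm_num [hsi]

set_option maxHeartbeats 1000000 in
lemma rho1_decomp : rhoH true = (1/8 : ℂ) • proj PhiM + (3/8 : ℂ) • proj PsiP - (1/8 : ℂ) • cross
    + (1/4 : ℝ) • proj PhiP + (1/4 : ℝ) • proj PsiM := by
  rw [rho1_eq, omg_ff, omg_ft, omg_tf, omg_tt]
  ext ⟨i,j⟩ ⟨k,l⟩
  fin_cases i <;> fin_cases j <;> fin_cases k <;> fin_cases l <;>
  · simp only [proj, cross, starPhiP, starPhiM, starPsiP, starPsiM, PhiP, PhiM, PsiP, PsiM, ket,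
      Matrix.add_apply, Matrix.sub_apply, Matrix.smul_apply, Matrix.kroneckerMap_apply,
      Matrix.vecMulVec_apply,
      Matrix.cons_val', Matrix.cons_val_zero, Matrix.cons_val_one, Matrix.head_cons,
      Matrix.head_fin_const, Matrix.empty_val', Matrix.cons_val_fin_one, Matrix.of_apply,
      smul_eq_mul, Complex.real_smul, Prod.mk.injEq]
    norm_num [Fin.ext_iff]
    ring_nf
    simp only [pow_two, hsi, one_div]
    norm_num [hsi]

/-- with the Hadamard-based encoding, ρ₀ and ρ₁ are simultaneously
diagonalized in the entangled eigenbasis φ₁, φ₂, φ₃, φ₄ with eigenvalues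
λ₊, λ₋, 1/4, 1/4 and λ₋, λ₊, 1/4, 1/4 respectively. -/
theorem hadamard_entangled_eigenbasis :
    rhoH false = lamP • proj phi1 + lamM • proj phi2
        + (1/4 : ℝ) • proj phi3 + (1/4 : ℝ) • proj phi4 ∧
    rhoH true = lamM • proj phi1 + lamP • proj phi2
        + (1/4 : ℝ) • proj phi3 + (1/4 : ℝ) • proj phi4 := by
  constructor
  · rw [combo0]
    exact rho0_decomp
  · rw [combo1]
    exact rho1_decomp
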